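/- arXiv:1609.04072 — 4 statements merged into one kernel-verified Lean document; each statement's English description precedes it below -/
import Mathlib

section
/- The connected components functor q : Cat → Set preserves fiber products over discrete categories: if E is a discrete category and f : C → E, g : D → E are functors, then q(C ×_E D) ≅ q(C) ×_{q(E)} q(D). -/
/-!
Since `E` is discrete, the fiber product `C ×_E D` is the full subcategory of `C × D` on the
pairs `(c, d)` with `f c = g d`, and `f`, `g` are constant on connected components. Hence a
zigzag from `c` to `c'` in `C` runs inside the fiber product with the second coordinate held at
`d`, and likewise in `D`; composing the two shows that pairs with connected coordinates are
connected (injectivity). Surjectivity is that `f c = g d` as soon as their components agree.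
-/

open CategoryTheory Limits

universe u

lemma mapConnectedComponents_comp {J K L : Type u} [Category.{u} J] [Category.{u} K]
    [Category.{u} L] (F : J ⥤ K) (G : K ⥤ L) (x : ConnectedComponents J) :
    (F ⋙ G).mapConnectedComponents x = G.mapConnectedComponents (F.mapConnectedComponents x) := by
  obtain ⟨a, rfl⟩ := Quotient.exists_rep x
  rfl

/-- The canonical comparison map from the connected components of the pullback to the
fiber product of the connected components. -/
noncomputable def qComparison (C D : Cat.{u, u}) (S : Type u)
    (f : C ⟶ Cat.of (Discrete S)) (g : D ⟶ Cat.of (Discrete S)) :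
    ConnectedComponents ↥(pullback f g) →
      {y : ConnectedComponents ↥C × ConnectedComponents ↥D //
        (f.toFunctor : ↥C ⥤ Discrete S).mapConnectedComponents y.1 =
          (g.toFunctor : ↥D ⥤ Discrete S).mapConnectedComponents y.2} :=
  fun x =>
    ⟨(((pullback.fst f g).toFunctor : ↥(pullback f g) ⥤ ↥C).mapConnectedComponents x,
      ((pullback.snd f g).toFunctor : ↥(pullback f g) ⥤ ↥D).mapConnectedComponents x), by
        rw [← mapConnectedComponents_comp, ← mapConnectedComponents_comp]
        have h : pullback.fst f g ≫ f = pullback.snd f g ≫ g := pullback.condition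
        show (pullback.fst f g ≫ f).toFunctor.mapConnectedComponents x =
          (pullback.snd f g ≫ g).toFunctor.mapConnectedComponents x
        rw [h]⟩

namespace CategoryTheory

lemma Functor.obj_eq_of_zigzag {J : Type u} [Category.{u} J] {S : Type u} (F : J ⥤ Discrete S)
    {a b : J} (h : Zigzag a b) : F.obj a = F.obj b :=
  Discrete.ext (eq_of_zigzag S (zigzag_obj_of_zigzag F h))

namespace Cat

variable {C D : Cat.{u, u}} {S : Type u}
  (f : C ⟶ Cat.of (Discrete S)) (g : D ⟶ Cat.of (Discrete S))

abbrev FiberProduct : Cat.{u, u} :=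
  Cat.of <| ObjectProperty.FullSubcategory fun p : C × D =>
    f.toFunctor.obj p.1 = g.toFunctor.obj p.2

namespace FiberProduct

def fst : FiberProduct f g ⟶ C := (ObjectProperty.ι _ ⋙ Prod.fst C D).toCatHom

def snd : FiberProduct f g ⟶ D := (ObjectProperty.ι _ ⋙ Prod.snd C D).toCatHom

lemma condition : fst f g ≫ f = snd f g ≫ g :=
  Hom.ext <| Functor.ext (fun p => p.property)
    (fun _ _ _ => (Discrete.instSubsingletonDiscreteHom _ _).elim _ _)

variable {f g}

lemma zigzag_of_zigzag_fst {p q : FiberProduct f g} (h : Zigzag p.obj.1 q.obj.1)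
    (hd : p.obj.2 = q.obj.2) : Zigzag p q := by
  obtain ⟨⟨a, d⟩, hp⟩ := p
  obtain ⟨⟨a', d'⟩, hq⟩ := q
  obtain rfl : d = d' := hd
  -- `f` is constant on the component of `a`, which is connected; pair it with `d`.
  let j := ConnectedComponents.mk a
  have hj : ∀ b : j.Component, f.toFunctor.obj b.obj = g.toFunctor.obj d := fun b =>
    (f.toFunctor.obj_eq_of_zigzag (Quotient.exact' b.property)).trans hp
  let L : j.Component ⥤ FiberProduct f g :=
    ObjectProperty.lift _ (j.ι.prod' ((Functor.const _).obj d)) hj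
  exact zigzag_obj_of_zigzag L (isPreconnected_zigzag (J := j.Component) ⟨a, rfl⟩
    ⟨a', (Quotient.sound' h).symm⟩)

lemma zigzag_of_zigzag_snd {p q : FiberProduct f g} (h : Zigzag p.obj.2 q.obj.2)
    (hc : p.obj.1 = q.obj.1) : Zigzag p q := by
  obtain ⟨⟨c, b⟩, hp⟩ := p
  obtain ⟨⟨c', b'⟩, hq⟩ := q
  obtain rfl : c = c' := hc
  let j := ConnectedComponents.mk b
  have hj : ∀ e : j.Component, f.toFunctor.obj c = g.toFunctor.obj e.obj := fun e =>
    hp.trans (g.toFunctor.obj_eq_of_zigzag (Quotient.exact' e.property).symm)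
  let L : j.Component ⥤ FiberProduct f g :=
    ObjectProperty.lift _ (((Functor.const _).obj c).prod' j.ι) hj
  exact zigzag_obj_of_zigzag L (isPreconnected_zigzag (J := j.Component) ⟨b, rfl⟩
    ⟨b', (Quotient.sound' h).symm⟩)

lemma zigzag_of_zigzag_fst_of_zigzag_snd {p q : FiberProduct f g} (h₁ : Zigzag p.obj.1 q.obj.1)
    (h₂ : Zigzag p.obj.2 q.obj.2) : Zigzag p q :=
  let m : FiberProduct f g :=
    ⟨(q.obj.1, p.obj.2), (f.toFunctor.obj_eq_of_zigzag h₁).symm.trans p.property⟩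
  (zigzag_of_zigzag_fst (q := m) h₁ rfl).trans (zigzag_of_zigzag_snd (p := m) h₂ rfl)

end FiberProduct

noncomputable def toFiberProduct : pullback f g ⟶ FiberProduct f g :=
  (ObjectProperty.lift _ ((pullback.fst f g).toFunctor.prod' (pullback.snd f g).toFunctor)
    fun x => Functor.congr_obj (congrArg Hom.toFunctor (pullback.condition (f := f) (g := g))) x
  ).toCatHom

noncomputable def ofFiberProduct : FiberProduct f g ⟶ pullback f g :=
  pullback.lift (FiberProduct.fst f g) (FiberProduct.snd f g) (FiberProduct.condition f g)

lemma ofFiberProduct_fst : ofFiberProduct f g ≫ pullback.fst f g = FiberProduct.fst f g :=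
  pullback.lift_fst _ _ _

lemma ofFiberProduct_snd : ofFiberProduct f g ≫ pullback.snd f g = FiberProduct.snd f g :=
  pullback.lift_snd _ _ _

lemma toFiberProduct_ofFiberProduct : toFiberProduct f g ≫ ofFiberProduct f g = 𝟙 _ :=
  pullback.hom_ext (by rw [Category.assoc, ofFiberProduct_fst]; rfl)
    (by rw [Category.assoc, ofFiberProduct_snd]; rfl)

lemma ofFiberProduct_obj_toFiberProduct_obj (x : ↥(pullback f g)) :
    (ofFiberProduct f g).toFunctor.obj ((toFiberProduct f g).toFunctor.obj x) = x :=
  Functor.congr_obj (congrArg Hom.toFunctor (toFiberProduct_ofFiberProduct f g)) x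

lemma exists_pullback_obj_of_obj_eq {c : C} {d : D} (h : f.toFunctor.obj c = g.toFunctor.obj d) :
    ∃ x : ↥(pullback f g), (pullback.fst f g).toFunctor.obj x = c ∧
      (pullback.snd f g).toFunctor.obj x = d :=
  ⟨(ofFiberProduct f g).toFunctor.obj ⟨(c, d), h⟩,
    Functor.congr_obj (congrArg Hom.toFunctor (ofFiberProduct_fst f g)) _,
    Functor.congr_obj (congrArg Hom.toFunctor (ofFiberProduct_snd f g)) _⟩

lemma pullback_zigzag_of_zigzag_fst_of_zigzag_snd {x y : ↥(pullback f g)}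
    (h₁ : Zigzag ((pullback.fst f g).toFunctor.obj x) ((pullback.fst f g).toFunctor.obj y))
    (h₂ : Zigzag ((pullback.snd f g).toFunctor.obj x) ((pullback.snd f g).toFunctor.obj y)) :
    Zigzag x y := by
  have h := zigzag_obj_of_zigzag (ofFiberProduct f g).toFunctor
    (FiberProduct.zigzag_of_zigzag_fst_of_zigzag_snd (p := (toFiberProduct f g).toFunctor.obj x)
      (q := (toFiberProduct f g).toFunctor.obj y) h₁ h₂)
  rwa [ofFiberProduct_obj_toFiberProduct_obj, ofFiberProduct_obj_toFiberProduct_obj] at h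

end Cat

end CategoryTheory

theorem connectedComponents_pullback_over_discrete_bijective
    (C D : Cat.{u, u}) (S : Type u)
    (f : C ⟶ Cat.of (Discrete S)) (g : D ⟶ Cat.of (Discrete S)) :
    Function.Bijective (qComparison C D S f g) := by
  constructor
  · intro x y h
    induction x using Quotient.inductionOn
    induction y using Quotient.inductionOn
    exact Quotient.sound (Cat.pullback_zigzag_of_zigzag_fst_of_zigzag_snd f g
      (Quotient.exact (congrArg (·.1.1) h)) (Quotient.exact (congrArg (·.1.2) h)))
  · rintro ⟨⟨c, d⟩, h⟩
    induction c using Quotient.inductionOn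
    induction d using Quotient.inductionOn
    obtain ⟨x, rfl, rfl⟩ := Cat.exists_pullback_obj_of_obj_eq f g
      (Discrete.ext (eq_of_zigzag S (Quotient.exact h)))
    exact ⟨Quotient.mk _ x, rfl⟩
end

section
/- If C is an equivalence relation (a category equivalent to a discrete category), then the décalage Dec C is also equivalent to a discrete category, and the functor d_1 : Dec C → C is an isofibration which is surjective on objects. -/
/-!
STATEMENT 8: If C is an equivalence relation (a homotopically discrete category, i.e.
the kernel groupoid A[f] of a surjective map of sets f : A → B), then the décalage
Dec C = (A ×_B A)[d₀] is also equivalent to a discrete category, and the functor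
d₁ : Dec C → C is an isofibration which is surjective on objects.
-/

open CategoryTheory

universe u

/-- A functor is an isofibration if every isomorphism in the target whose source is in
the image of the functor lifts to an isomorphism in the source. -/
def IsIsofibration {C : Type*} {D : Type*} [Category C] [Category D] (F : C ⥤ D) : Prop :=
  ∀ (c : C) (d : D) (e : F.obj c ≅ d), ∃ (c' : C) (e' : c ≅ c') (h : F.obj c' = d),
    F.mapIso e' ≪≫ eqToIso h = e

/-- The kernel category `A[f]` of a map of sets `f : A → B`: objects are the elements
of `A`, and there is a unique morphism `x ⟶ y` if and only if `f x = f y`. -/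
structure KernelCat {A B : Type u} (f : A → B) : Type u where
  pt : A

instance {A B : Type u} (f : A → B) : Category (KernelCat f) where
  Hom x y := PLift (f x.pt = f y.pt)
  id _ := ⟨rfl⟩
  comp g h := ⟨g.down.trans h.down⟩
  id_comp _ := rfl
  comp_id _ := rfl
  assoc _ _ _ := rfl

/-- The décalage of the kernel category `A[f]`: the kernel category of the first
projection `d₀ : A ×_B A → A`. -/
def DecKernelCat {A B : Type u} (f : A → B) : Type u :=
  KernelCat (fun p : {p : A × A // f p.1 = f p.2} => p.val.1)

instance {A B : Type u} (f : A → B) : Category (DecKernelCat f) :=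
  inferInstanceAs (Category (KernelCat _))

/-- The functor `d₁ : Dec A[f] → A[f]`, sending a pair `(x, y)` to `y`. -/
def decD₁ {A B : Type u} (f : A → B) : DecKernelCat f ⥤ KernelCat f where
  obj q := ⟨q.pt.val.2⟩
  map {q q'} g := ⟨q.pt.prop.symm.trans ((congrArg f g.down).trans q'.pt.prop)⟩
  map_id _ := rfl
  map_comp _ _ := rfl

/-
The kernel category of a surjection `g : X → Y` is equivalent to `Discrete Y` via `g`. The
projection `d₀` is split by the diagonal `a ↦ (a, a)`, so `Dec A[f] ≌ Discrete A`. An iso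
`y ≅ y'` lifts along `d₁` from `(x, y)` to `(x, y')`, and the lift is correct on the nose
because `A[f]` is thin.
-/

theorem isIsofibration_of_isThin {C D : Type*} [Category C] [Category D] [Quiver.IsThin D]
    (F : C ⥤ D) (lift : ∀ (c : C) (d : D), (F.obj c ≅ d) → ∃ (c' : C) (_ : c ≅ c'), F.obj c' = d) :
    IsIsofibration F := by
  intro c d e
  obtain ⟨c', e', h⟩ := lift c d e
  exact ⟨c', e', h, Iso.ext (Subsingleton.elim _ _)⟩

namespace KernelCat

variable {A B : Type u} {f : A → B}

instance : Quiver.IsThin (KernelCat f) := fun _ _ => ⟨fun ⟨_⟩ ⟨_⟩ => rfl⟩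

def isoOfEq {x y : KernelCat f} (h : f x.pt = f y.pt) : x ≅ y where
  hom := ⟨h⟩
  inv := ⟨h.symm⟩

def toDiscrete (f : A → B) : KernelCat f ⥤ Discrete B where
  obj x := ⟨f x.pt⟩
  map g := Discrete.eqToHom g.down

instance : (toDiscrete f).Full where
  map_surjective g := ⟨⟨Discrete.eq_of_hom g⟩, Subsingleton.elim _ _⟩

instance : (toDiscrete f).Faithful where
  map_injective _ := Subsingleton.elim _ _

theorem toDiscrete_isEquivalence (hf : Function.Surjective f) : (toDiscrete f).IsEquivalence where
  essSurj.mem_essImage b :=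
    let ⟨a, ha⟩ := hf b.as
    ⟨⟨a⟩, ⟨Discrete.eqToIso ha⟩⟩

noncomputable def equivDiscreteOfSurjective (hf : Function.Surjective f) :
    KernelCat f ≌ Discrete B :=
  have := toDiscrete_isEquivalence hf
  (toDiscrete f).asEquivalence

end KernelCat

section Decalage

variable {A B : Type u} (f : A → B)

theorem decD₀_surjective :
    Function.Surjective (fun p : {p : A × A // f p.1 = f p.2} => p.val.1) :=
  fun a => ⟨⟨(a, a), rfl⟩, rfl⟩

noncomputable def decEquivDiscrete : DecKernelCat f ≌ Discrete A :=
  KernelCat.equivDiscreteOfSurjective (decD₀_surjective f)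

instance : Quiver.IsThin (DecKernelCat f) := inferInstanceAs (Quiver.IsThin (KernelCat _))

theorem decD₁_isIsofibration : IsIsofibration (decD₁ f) :=
  isIsofibration_of_isThin _ fun c d e =>
    ⟨⟨⟨(c.pt.val.1, d.pt), c.pt.prop.trans e.hom.down⟩⟩, KernelCat.isoOfEq rfl, rfl⟩

theorem decD₁_obj_surjective : Function.Surjective (decD₁ f).obj :=
  fun y => ⟨⟨⟨(y.pt, y.pt), rfl⟩⟩, rfl⟩

end Decalage

theorem dec_of_hoDiscrete_hoDiscrete_and_d₁_isofibration_surjective_general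
    (A B : Type u) (f : A → B) :
    (∃ S : Type u, Nonempty (DecKernelCat f ≌ Discrete S)) ∧
    IsIsofibration (decD₁ f) ∧
    Function.Surjective (decD₁ f).obj :=
  ⟨⟨A, ⟨decEquivDiscrete f⟩⟩, decD₁_isIsofibration f, decD₁_obj_surjective f⟩

theorem dec_of_hoDiscrete_hoDiscrete_and_d₁_isofibration_surjective
    (A B : Type u) (f : A → B) (hf : Function.Surjective f) :
    (∃ S : Type u, Nonempty (DecKernelCat f ≌ Discrete S)) ∧
    IsIsofibration (decD₁ f) ∧
    Function.Surjective (decD₁ f).obj :=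
  dec_of_hoDiscrete_hoDiscrete_and_d₁_isofibration_surjective_general A B f
end

section
/- Let A be a category equivalent to a discrete category, B and C sets, g : dC → dB a functor between the corresponding discrete categories, and h : A → dB a functor. Then the pullback Q = dC ×_{dB} A in Cat is equivalent to a discrete category. -/
/-!
A category is homotopically discrete exactly when it is thin and a groupoid: passing to a
skeleton, a morphism becomes an isomorphism between isomorphic, hence equal, objects. Both
properties are computed componentwise in the standard construction of limits in `Cat`, so a
limit of homotopically discrete categories is homotopically discrete; the pullback is such a
limit over the essentially small shape `WalkingCospan`.
-/

open CategoryTheory Limits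

universe u

/-- A category is homotopically discrete if it is equivalent to a discrete category. -/
def HoDiscrete (C : Type u) [Category.{u} C] : Prop :=
  ∃ S : Type u, Nonempty (C ≌ Discrete S)

namespace HoDiscrete

variable {Q Q' : Type u} [Category.{u} Q] [Category.{u} Q']

theorem of_equivalence (e : Q ≌ Q') (h : HoDiscrete Q') : HoDiscrete Q :=
  let ⟨S, ⟨e'⟩⟩ := h
  ⟨S, ⟨e.trans e'⟩⟩

theorem isThin (h : HoDiscrete Q) : Quiver.IsThin Q :=
  let ⟨_, ⟨e⟩⟩ := h
  fun _ _ => ⟨fun _ _ => e.functor.map_injective (Subsingleton.elim _ _)⟩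

theorem isGroupoid (h : HoDiscrete Q) : IsGroupoid Q :=
  let ⟨_, ⟨e⟩⟩ := h
  ⟨fun f => isIso_of_reflects_iso f e.functor⟩

end HoDiscrete

theorem hoDiscrete_discrete (S : Type u) : HoDiscrete (Discrete S) :=
  ⟨S, ⟨.refl⟩⟩

section

variable {Q : Type u} [Category.{u} Q]

def equivDiscreteOfIsThin [Quiver.IsThin Q] (eq_of_hom : ∀ {X Y : Q}, (X ⟶ Y) → X = Y) :
    Q ≌ Discrete Q where
  functor := { obj := Discrete.mk, map := fun f => eqToHom (congrArg Discrete.mk (eq_of_hom f)) }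
  inverse := Discrete.functor id
  unitIso := NatIso.ofComponents fun _ => Iso.refl _
  counitIso := NatIso.ofComponents fun _ => Iso.refl _

theorem hoDiscrete_of_isThin_of_isGroupoid [Quiver.IsThin Q] [IsGroupoid Q] : HoDiscrete Q := by
  have : Quiver.IsThin (Skeleton Q) := fun _ _ =>
    ⟨fun _ _ => (fromSkeleton Q).map_injective (Subsingleton.elim _ _)⟩
  refine .of_equivalence (skeletonEquivalence Q).symm
    ⟨_, ⟨equivDiscreteOfIsThin fun f => ?_⟩⟩
  have : IsIso f := isIso_of_reflects_iso f (fromSkeleton Q)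
  exact skeleton_skeletal Q ⟨asIso f⟩

end

namespace CategoryTheory.Cat.HasLimits

variable {J : Type u} [SmallCategory J] (F : J ⥤ Cat.{u, u})

theorem isThin_limitConeX (hF : ∀ j, Quiver.IsThin (F.obj j)) :
    Quiver.IsThin (limitConeX F) := fun _ _ =>
  ⟨fun _ _ => Types.limit_ext _ _ _ fun j => (hF j _ _).elim _ _⟩

theorem isGroupoid_limitConeX (hF : ∀ j, Quiver.IsThin (F.obj j))
    (hF' : ∀ j, IsGroupoid (F.obj j)) : IsGroupoid (limitConeX F) where
  all_isIso {X Y} f := by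
    have := isThin_limitConeX F hF
    -- thinness of the components makes the componentwise inverses compatible
    let finv : Y ⟶ X := Types.Limit.mk (homDiagram Y X)
      (fun j => @inv _ _ _ _ (limit.π (homDiagram X Y) j f) ((hF' j).all_isIso _))
      fun _ j' _ => (hF j' _ _).elim _ _
    exact ⟨finv, Subsingleton.elim _ _, Subsingleton.elim _ _⟩

end CategoryTheory.Cat.HasLimits

theorem hoDiscrete_limit {J : Type*} [Category* J] [EssentiallySmall.{u} J]
    (F : J ⥤ Cat.{u, u}) [HasLimit F] (hF : ∀ j, HoDiscrete (F.obj j)) :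
    HoDiscrete ↥(limit F) := by
  let e := equivSmallModel.{u} J
  let G := e.inverse ⋙ F
  let iso : limit F ≅ Cat.HasLimits.limitConeX G :=
    HasLimit.isoOfEquivalence e (e.funInvIdAssoc F) ≪≫
      limit.isoLimitCone ⟨_, Cat.HasLimits.limitConeIsLimit G⟩
  have hG : ∀ j, HoDiscrete (G.obj j) := fun j => hF _
  have := Cat.HasLimits.isThin_limitConeX G fun j => (hG j).isThin
  have := Cat.HasLimits.isGroupoid_limitConeX G (fun j => (hG j).isThin)
    fun j => (hG j).isGroupoid
  exact .of_equivalence (Cat.equivOfIso iso) hoDiscrete_of_isThin_of_isGroupoid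

theorem pullback_discrete_hoDiscrete_is_hoDiscrete
    (A : Cat.{u, u}) (B C : Type u)
    (g : Cat.of (Discrete C) ⟶ Cat.of (Discrete B))
    (h : A ⟶ Cat.of (Discrete B))
    (hA : HoDiscrete ↥A) :
    HoDiscrete ↥(pullback g h) := by
  have : EssentiallySmall.{u} WalkingCospan :=
    .mk' (ULiftHomULiftCategory.equiv.{u, u} WalkingCospan)
  refine hoDiscrete_limit (cospan g h) ?_
  rintro (_ | _ | _)
  exacts [hoDiscrete_discrete B, hoDiscrete_discrete C, hA]
end

section
/- Let C be a category with finite limits, X an internal category in C, f_0 : Y_0 → X_0 a morphism, and X(f_0) the internal category obtained by pulling back X along f_0. Then for each k ≥ 2 there is a pullback square in C expressing X(f_0)_k = X(f_0)_1 ×_{Y_0} ⋯ ×_{Y_0} X(f_0)_1 as the pullback of X_k = X_1 ×_{X_0} ⋯ ×_{X_0} X_1 along the (k+1)-fold product map f_0 × ⋯ × f_0 : Y_0^{k+1} → X_0^{k+1}. -/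
/-!
`X(f₀)_{k+2}` is the fiber product `X(f₀)_{k+1} ×_{Y₀} X(f₀)₁`, and by induction both factors are
pullbacks of the corresponding chain objects of `X` along powers of `f₀` (the factor `X(f₀)₁` by
construction). A generalized element of `X_{k+2}` together with compatible lifts of its `k + 3`
vertices to `Y₀` restricts to such data on `X_{k+1}` and on the last edge `X₁`; these lift
uniquely, and the two lifts agree on the shared vertex, so they glue to a point of `X(f₀)_{k+2}`.
-/

open CategoryTheory Limits

universe v u

/-- An internal category in a category `C` with pullbacks: an object of objects `X₀`,
an object of morphisms `X₁`, source and target maps, an identity map and a composition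
map, satisfying the usual axioms of a category. In `pullback tgt src`, the first
component is the first morphism of a composable pair and the second component is the
second. -/
structure InternalCategory (C : Type u) [Category.{v} C] [HasPullbacks C] where
  X₀ : C
  X₁ : C
  src : X₁ ⟶ X₀
  tgt : X₁ ⟶ X₀
  ide : X₀ ⟶ X₁
  comp : pullback tgt src ⟶ X₁
  ide_src : ide ≫ src = 𝟙 X₀
  ide_tgt : ide ≫ tgt = 𝟙 X₀
  comp_src : comp ≫ src = pullback.fst tgt src ≫ src
  comp_tgt : comp ≫ tgt = pullback.snd tgt src ≫ tgt
  id_comp :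
    pullback.lift (src ≫ ide) (𝟙 X₁)
      (by rw [Category.assoc, ide_tgt, Category.comp_id, Category.id_comp]) ≫ comp = 𝟙 X₁
  comp_id :
    pullback.lift (𝟙 X₁) (tgt ≫ ide)
      (by rw [Category.id_comp, Category.assoc, ide_src, Category.comp_id]) ≫ comp = 𝟙 X₁
  assoc :
    pullback.lift (pullback.fst (pullback.snd tgt src ≫ tgt) src ≫ comp)
      (pullback.snd (pullback.snd tgt src ≫ tgt) src)
      (by rw [Category.assoc, comp_tgt, ← Category.assoc]
          simpa using pullback.condition) ≫ comp =
    pullback.lift (pullback.fst (pullback.snd tgt src ≫ tgt) src ≫ pullback.fst tgt src)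
      (pullback.lift (pullback.fst (pullback.snd tgt src ≫ tgt) src ≫ pullback.snd tgt src)
        (pullback.snd (pullback.snd tgt src ≫ tgt) src)
        (by rw [Category.assoc]; exact pullback.condition) ≫ comp)
      (by conv_lhs => rw [Category.assoc, pullback.condition, ← Category.assoc]
          conv_rhs => rw [Category.assoc, comp_src, ← Category.assoc, pullback.lift_fst]) ≫
      comp

/-- The iterated fiber product `Z₁ ×_{Z₀} Z₁ ×_{Z₀} ⋯ ×_{Z₀} Z₁` (`k` factors) of a
graph `s, t : Z₁ ⟶ Z₀`, together with the "last vertex" map to `Z₀`. -/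
noncomputable def fibChain {C : Type u} [Category.{v} C] [HasPullbacks C]
    (Z₀ Z₁ : C) (s t : Z₁ ⟶ Z₀) : (k : ℕ) → Σ' (P : C), P ⟶ Z₀
  | 0 => ⟨Z₀, 𝟙 Z₀⟩
  | 1 => ⟨Z₁, t⟩
  | (k+2) => ⟨pullback (fibChain Z₀ Z₁ s t (k+1)).2 s, pullback.snd _ _ ≫ t⟩

/-- The `i`-th vertex map of the iterated fiber product. -/
noncomputable def chainVertex {C : Type u} [Category.{v} C] [HasPullbacks C]
    (Z₀ Z₁ : C) (s t : Z₁ ⟶ Z₀) :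
    (k : ℕ) → (i : Fin (k + 1)) → ((fibChain Z₀ Z₁ s t k).1 ⟶ Z₀)
  | 0, _ => 𝟙 Z₀
  | 1, i => if i = 0 then s else t
  | (k+2), i =>
      if h : i.val ≤ k + 1 then
        pullback.fst _ _ ≫ chainVertex Z₀ Z₁ s t (k+1) ⟨i.val, by omega⟩
      else pullback.snd _ _ ≫ t

section

variable {C : Type u} [Category.{v} C] [HasFiniteLimits C]
  (X : InternalCategory C) {Y₀ : C} (f₀ : Y₀ ⟶ X.X₀)

lemma fst_comp_src :
    pullback.fst (prod.lift X.src X.tgt) (prod.map f₀ f₀) ≫ X.src =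
      (pullback.snd (prod.lift X.src X.tgt) (prod.map f₀ f₀) ≫ prod.fst) ≫ f₀ := by
  have h := pullback.condition (f := prod.lift X.src X.tgt) (g := prod.map f₀ f₀)
  calc pullback.fst (prod.lift X.src X.tgt) (prod.map f₀ f₀) ≫ X.src
      = pullback.fst (prod.lift X.src X.tgt) (prod.map f₀ f₀) ≫
          prod.lift X.src X.tgt ≫ prod.fst := by rw [prod.lift_fst]
    _ = (pullback.snd (prod.lift X.src X.tgt) (prod.map f₀ f₀) ≫ prod.map f₀ f₀) ≫
          prod.fst := by rw [← Category.assoc, h]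
    _ = pullback.snd (prod.lift X.src X.tgt) (prod.map f₀ f₀) ≫ prod.fst ≫ f₀ := by
          rw [Category.assoc, prod.map_fst]
    _ = (pullback.snd (prod.lift X.src X.tgt) (prod.map f₀ f₀) ≫ prod.fst) ≫ f₀ := by
          rw [Category.assoc]

lemma fst_comp_tgt :
    pullback.fst (prod.lift X.src X.tgt) (prod.map f₀ f₀) ≫ X.tgt =
      (pullback.snd (prod.lift X.src X.tgt) (prod.map f₀ f₀) ≫ prod.snd) ≫ f₀ := by
  have h := pullback.condition (f := prod.lift X.src X.tgt) (g := prod.map f₀ f₀)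
  calc pullback.fst (prod.lift X.src X.tgt) (prod.map f₀ f₀) ≫ X.tgt
      = pullback.fst (prod.lift X.src X.tgt) (prod.map f₀ f₀) ≫
          prod.lift X.src X.tgt ≫ prod.snd := by rw [prod.lift_snd]
    _ = (pullback.snd (prod.lift X.src X.tgt) (prod.map f₀ f₀) ≫ prod.map f₀ f₀) ≫
          prod.snd := by rw [← Category.assoc, h]
    _ = pullback.snd (prod.lift X.src X.tgt) (prod.map f₀ f₀) ≫ prod.snd ≫ f₀ := by
          rw [Category.assoc, prod.map_snd]
    _ = (pullback.snd (prod.lift X.src X.tgt) (prod.map f₀ f₀) ≫ prod.snd) ≫ f₀ := by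
          rw [Category.assoc]

/-- The canonical map from the iterated fiber product of the base change `X(f₀)` to
the iterated fiber product of `X`, together with its compatibility with the
last-vertex maps. -/
noncomputable def baseChangeChainMap : (k : ℕ) →
    Σ' (φ : (fibChain Y₀ (pullback (prod.lift X.src X.tgt) (prod.map f₀ f₀))
        (pullback.snd (prod.lift X.src X.tgt) (prod.map f₀ f₀) ≫ prod.fst)
        (pullback.snd (prod.lift X.src X.tgt) (prod.map f₀ f₀) ≫ prod.snd) k).1 ⟶
          (fibChain X.X₀ X.X₁ X.src X.tgt k).1),
      (fibChain Y₀ (pullback (prod.lift X.src X.tgt) (prod.map f₀ f₀))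
        (pullback.snd (prod.lift X.src X.tgt) (prod.map f₀ f₀) ≫ prod.fst)
        (pullback.snd (prod.lift X.src X.tgt) (prod.map f₀ f₀) ≫ prod.snd) k).2 ≫ f₀ =
        φ ≫ (fibChain X.X₀ X.X₁ X.src X.tgt k).2
  | 0 => ⟨f₀, by simp [fibChain]⟩
  | 1 => ⟨pullback.fst (prod.lift X.src X.tgt) (prod.map f₀ f₀),
      (fst_comp_tgt X f₀).symm⟩
  | (k+2) =>
    ⟨pullback.map _ _ _ _ (baseChangeChainMap (k+1)).1
      (pullback.fst (prod.lift X.src X.tgt) (prod.map f₀ f₀)) f₀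
      (baseChangeChainMap (k+1)).2 (fst_comp_src X f₀).symm, by
        show (pullback.snd _ _ ≫ _) ≫ f₀ = _ ≫ pullback.snd _ _ ≫ _
        conv_rhs => rw [← Category.assoc, pullback.lift_snd, Category.assoc, fst_comp_tgt X f₀]
        simp only [Category.assoc]⟩

end

section

variable {C : Type u} [Category.{v} C]

/-- `IsPiPullback φ p q f` says that the square formed by `φ`, `Pi.lift p`, `Pi.lift q` and
`Pi.map fun _ => f` is a pullback, phrased with generalized elements so that it makes sense
without products. -/
structure IsPiPullback {ι : Type*} {P Q A B : C} (φ : P ⟶ Q) (p : ι → (P ⟶ A))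
    (q : ι → (Q ⟶ B)) (f : A ⟶ B) : Prop where
  w (i : ι) : φ ≫ q i = p i ≫ f
  hom_ext {T : C} {a b : T ⟶ P} : a ≫ φ = b ≫ φ → (∀ i, a ≫ p i = b ≫ p i) → a = b
  exists_lift {T : C} (x : T ⟶ Q) (y : ι → (T ⟶ A)) :
    (∀ i, x ≫ q i = y i ≫ f) → ∃ z : T ⟶ P, z ≫ φ = x ∧ ∀ i, z ≫ p i = y i

attribute [local simp] prod.lift_fst prod.lift_snd pullback.lift_fst pullback.lift_snd
  pullback.lift_fst_assoc pullback.lift_snd_assoc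

theorem IsPiPullback.isPullback {ι : Type*} {P Q A B : C} {φ : P ⟶ Q} {p : ι → (P ⟶ A)}
    {q : ι → (Q ⟶ B)} {f : A ⟶ B} [HasProduct fun _ : ι => A] [HasProduct fun _ : ι => B]
    (h : IsPiPullback φ p q f) :
    IsPullback φ (Pi.lift p) (Pi.lift q) (Limits.Pi.map fun _ => f) := by
  have components {T : C} (x : T ⟶ Q) (y : T ⟶ ∏ᶜ fun _ : ι => A)
      (hxy : x ≫ Pi.lift q = y ≫ Limits.Pi.map fun _ => f) (i : ι) :
      x ≫ q i = (y ≫ Pi.π _ i) ≫ f := by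
    simpa using hxy =≫ Pi.π _ i
  choose lift lift_φ lift_p using fun s : PullbackCone (Pi.lift q) (Limits.Pi.map fun _ => f) =>
    h.exists_lift s.fst (fun i => s.snd ≫ Pi.π _ i) (components _ _ s.condition)
  refine IsPullback.of_isLimit' ⟨Pi.hom_ext _ _ fun i => by simp [h.w i]⟩
    (PullbackCone.IsLimit.mk _ lift lift_φ (fun s => Pi.hom_ext _ _ fun i => by simp [lift_p])
      fun s m hφ hp => h.hom_ext (hφ.trans (lift_φ s).symm) fun i => ?_)
  simpa [lift_p] using hp =≫ Pi.π _ i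

theorem CategoryTheory.IsPullback.isPiPullback_fin_two {P Q A B : C} [HasBinaryProduct A A]
    [HasBinaryProduct B B] {φ : P ⟶ Q} {π : P ⟶ A ⨯ A} {q : Fin 2 → (Q ⟶ B)} {f : A ⟶ B}
    (h : IsPullback φ π (prod.lift (q 0) (q 1)) (prod.map f f)) :
    IsPiPullback φ ![π ≫ prod.fst, π ≫ prod.snd] q f where
  w i := by
    fin_cases i
    · simpa using h.w =≫ prod.fst
    · simpa using h.w =≫ prod.snd
  hom_ext hφ hπ := h.hom_ext hφ <| prod.hom_ext (by simpa using hπ 0) (by simpa using hπ 1)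
  exists_lift x y hxy := by
    refine ⟨h.lift x (prod.lift (y 0) (y 1)) (prod.hom_ext ?_ ?_), h.lift_fst .., fun i => ?_⟩
    · simpa using hxy 0
    · simpa using hxy 1
    · fin_cases i <;> simp

/-- Extending chains by one edge `s, t : Y₁ ⟶ Y₀` (resp. `s', t'`) preserves `IsPiPullback`. -/
theorem IsPiPullback.pullbackMap {n : ℕ} {P Q Y₀ Y₁ X₀ X₁ : C} {ℓ : P ⟶ Y₀} {ℓ' : Q ⟶ X₀}
    {s t : Y₁ ⟶ Y₀} {s' t' : X₁ ⟶ X₀} [HasPullback ℓ s] [HasPullback ℓ' s']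
    {φ : P ⟶ Q} {f₀ : Y₀ ⟶ X₀} {f₁ : Y₁ ⟶ X₁}
    {p : Fin (n + 1) → (P ⟶ Y₀)} {q : Fin (n + 1) → (Q ⟶ X₀)}
    (hp : p (Fin.last n) = ℓ) (hq : q (Fin.last n) = ℓ')
    (hφ : IsPiPullback φ p q f₀) (hf₁ : IsPiPullback f₁ ![s, t] ![s', t'] f₀)
    (h₁ : ℓ ≫ f₀ = φ ≫ ℓ') (h₂ : s ≫ f₀ = f₁ ≫ s') :
    IsPiPullback (pullback.map ℓ s ℓ' s' φ f₁ f₀ h₁ h₂)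
      (Fin.snoc (α := fun _ => pullback ℓ s ⟶ Y₀)
        (fun j => pullback.fst ℓ s ≫ p j) (pullback.snd ℓ s ≫ t))
      (Fin.snoc (α := fun _ => pullback ℓ' s' ⟶ X₀)
        (fun j => pullback.fst ℓ' s' ≫ q j) (pullback.snd ℓ' s' ≫ t')) f₀ where
  w i := by
    induction i using Fin.lastCases with
    | last => simpa using pullback.snd ℓ s ≫= hf₁.w 1
    | cast j => simpa using pullback.fst ℓ s ≫= hφ.w j
  hom_ext {T a b} hmap hv := by
    have hv_fst (j : Fin (n + 1)) :
        (a ≫ pullback.fst ℓ s) ≫ p j = (b ≫ pullback.fst ℓ s) ≫ p j := by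
      simpa using hv j.castSucc
    apply pullback.hom_ext
    · exact hφ.hom_ext (by simpa using hmap =≫ pullback.fst _ _) hv_fst
    · refine hf₁.hom_ext (by simpa using hmap =≫ pullback.snd _ _) fun i => ?_
      fin_cases i
      · simpa [← pullback.condition, hp] using hv_fst (Fin.last _)
      · simpa using hv (Fin.last _)
  exists_lift x y hxy := by
    obtain ⟨a, ha_φ, ha_p⟩ := hφ.exists_lift (x ≫ pullback.fst _ _) (fun j => y j.castSucc)
      fun j => by simpa using hxy j.castSucc
    obtain ⟨b, hb_f₁, hb_st⟩ := hf₁.exists_lift (x ≫ pullback.snd _ _)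
      ![y (Fin.last n).castSucc, y (Fin.last (n + 1))] fun i => by
        fin_cases i
        · simpa [← pullback.condition, hq] using hxy (Fin.last n).castSucc
        · simpa using hxy (Fin.last (n + 1))
    have hab : a ≫ ℓ = b ≫ s := by
      simpa [hp] using (ha_p (Fin.last _)).trans (hb_st 0).symm
    refine ⟨pullback.lift a b hab, pullback.hom_ext (by simp [ha_φ]) (by simp [hb_f₁]),
      fun i => ?_⟩
    induction i using Fin.lastCases with
    | last => simpa using hb_st 1
    | cast j => simpa using ha_p j

end

section

variable {C : Type u} [Category.{v} C] [HasPullbacks C] {Z₀ Z₁ : C} (s t : Z₁ ⟶ Z₀)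

theorem chainVertex_one : chainVertex Z₀ Z₁ s t 1 = ![s, t] := by
  ext i
  fin_cases i <;> rfl

theorem chainVertex_last (k : ℕ) :
    chainVertex Z₀ Z₁ s t k (Fin.last k) = (fibChain Z₀ Z₁ s t k).2 := by
  match k with
  | 0 => rfl
  | 1 => rfl
  | k + 2 => simp [chainVertex, fibChain]

theorem chainVertex_succ_succ (k : ℕ) :
    chainVertex Z₀ Z₁ s t (k + 2) =
      Fin.snoc (α := fun _ => pullback (fibChain Z₀ Z₁ s t (k + 1)).2 s ⟶ Z₀)
        (fun j => pullback.fst _ s ≫ chainVertex Z₀ Z₁ s t (k + 1) j) (pullback.snd _ s ≫ t) := by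
  ext i
  induction i using Fin.lastCases with
  | last =>
    rw [Fin.snoc_last]
    exact chainVertex_last s t (k + 2)
  | cast j =>
    rw [Fin.snoc_castSucc]
    simp only [chainVertex, Fin.val_castSucc, j.is_le, dif_pos]
    rfl

end

section

variable {C : Type u} [Category.{v} C] [HasFiniteLimits C]
  (X : InternalCategory C) {Y₀ : C} (f₀ : Y₀ ⟶ X.X₀)

theorem isPiPullback_baseChangeChainMap (k : ℕ) :
    IsPiPullback (baseChangeChainMap X f₀ (k + 1)).1
      (chainVertex Y₀ (pullback (prod.lift X.src X.tgt) (prod.map f₀ f₀))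
        (pullback.snd (prod.lift X.src X.tgt) (prod.map f₀ f₀) ≫ prod.fst)
        (pullback.snd (prod.lift X.src X.tgt) (prod.map f₀ f₀) ≫ prod.snd) (k + 1))
      (chainVertex X.X₀ X.X₁ X.src X.tgt (k + 1)) f₀ := by
  have edge : IsPiPullback (pullback.fst (prod.lift X.src X.tgt) (prod.map f₀ f₀))
      ![pullback.snd _ _ ≫ prod.fst, pullback.snd _ _ ≫ prod.snd] ![X.src, X.tgt] f₀ :=
    IsPullback.isPiPullback_fin_two (q := ![X.src, X.tgt]) (IsPullback.of_hasPullback _ _)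
  induction k with
  | zero =>
    rw [chainVertex_one, chainVertex_one]
    exact edge
  | succ k ih =>
    rw [chainVertex_succ_succ, chainVertex_succ_succ]
    exact ih.pullbackMap (chainVertex_last ..) (chainVertex_last ..) edge
      (baseChangeChainMap X f₀ (k + 1)).2 (fst_comp_src X f₀).symm

/-- For each `k ≥ 2`, the `k`-fold fiber product of the base change `X(f₀)` is the
pullback of the `k`-fold fiber product of `X` along the `(k+1)`-fold product map
`f₀ × ⋯ × f₀ : Y₀^{k+1} → X₀^{k+1}`. -/
theorem baseChange_chain_isPullback :
    ∀ k, 2 ≤ k →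
      IsPullback (baseChangeChainMap X f₀ k).1
        (Pi.lift fun i : Fin (k + 1) =>
          chainVertex Y₀ (pullback (prod.lift X.src X.tgt) (prod.map f₀ f₀))
            (pullback.snd (prod.lift X.src X.tgt) (prod.map f₀ f₀) ≫ prod.fst)
            (pullback.snd (prod.lift X.src X.tgt) (prod.map f₀ f₀) ≫ prod.snd) k i)
        (Pi.lift fun i : Fin (k + 1) => chainVertex X.X₀ X.X₁ X.src X.tgt k i)
        (Limits.Pi.map fun _ : Fin (k + 1) => f₀) := by
  intro k hk
  obtain ⟨k, rfl⟩ : ∃ m, k = m + 1 := ⟨k - 1, by omega⟩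
  exact (isPiPullback_baseChangeChainMap X f₀ k).isPullback

end
end
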